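/- arXiv:0807.4308 — 6 statements merged into one kernel-verified Lean document; each statement's English description precedes it below -/
import Mathlib

section
/- Let K be an algebraically closed field and let f ∈ K[Z] be a polynomial of degree n ≥ 1. The following are equivalent: (i) for every integer k with 0 ≤ k < n, the image of the k-th Hasse derivative Δ^k f in the quotient ring K[Z]/(f) is nilpotent; (ii) there exists α ∈ K such that f = c·(Z − α)^n, where c is the leading coefficient of f. -/
/-!
Taylor expansion at `α` identifies `(Δ^k f)(α)` with the `k`-th coefficient of `f(X + α)`, so
`(X - α)^n ∣ f` exactly when `(Δ^k f)(α) = 0` for all `k < n`. If every `Δ^k f` is nilpotent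
modulo `f`, then it vanishes at a root `α` of `f` (since `K` is reduced), hence `(X - α)^n ∣ f`,
and comparing degrees gives `f = c (X - α)^n`. Conversely, for `f = c (X - α)^n` each `Δ^k f`
with `k < n` is divisible by `X - α`, so its `n`-th power is divisible by `f`.
-/

open Polynomial

namespace Ideal.Quotient

variable {R : Type*} [CommRing R]

theorem isNilpotent_mk_span_singleton_iff {a b : R} :
    IsNilpotent (mk (span {a}) b) ↔ ∃ N : ℕ, a ∣ b ^ N := by
  simp only [IsNilpotent, ← map_pow, eq_zero_iff_mem, mem_span_singleton]

theorem isNilpotent_mk_span_of_dvd_pow {a b c : R} {n : ℕ} (ha : a ∣ c ^ n) (hc : c ∣ b) :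
    IsNilpotent (mk (span {a}) b) :=
  isNilpotent_mk_span_singleton_iff.mpr ⟨n, ha.trans (pow_dvd_pow_of_dvd hc n)⟩

end Ideal.Quotient

namespace Polynomial

variable {R : Type*} [CommRing R]

theorem pow_X_sub_C_dvd_iff_eval_hasseDeriv {f : R[X]} {r : R} {n : ℕ} :
    (X - C r) ^ n ∣ f ↔ ∀ k < n, (hasseDeriv k f).eval r = 0 := by
  have h : taylorEquiv r ((X - C r) ^ n) = X ^ n := by
    change taylor r _ = _
    rw [taylor_pow, map_sub, taylor_X, taylor_C, add_sub_cancel_right]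
  rw [← map_dvd_iff (taylorEquiv r), h, X_pow_dvd_iff]
  exact forall₂_congr fun k _ => by rw [← taylor_coeff]; rfl

theorem IsRoot.of_isNilpotent_mk_span [IsReduced R] {f g : R[X]} {r : R} (hf : f.IsRoot r)
    (hg : IsNilpotent (Ideal.Quotient.mk (Ideal.span {f}) g)) : g.IsRoot r := by
  obtain ⟨N, q, hq⟩ := Ideal.Quotient.isNilpotent_mk_span_singleton_iff.mp hg
  have hN : (g.eval r) ^ N = 0 := by rw [← eval_pow, hq, eval_mul, hf.eq_zero, zero_mul]
  exact IsNilpotent.eq_zero ⟨N, hN⟩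

end Polynomial

/-- Let `K` be an algebraically closed field and `f ∈ K[Z]` a polynomial of
degree `n ≥ 1`.  The following are equivalent: (i) for every `k < n` the image of the `k`-th
Hasse derivative `Δ^k f` in `K[Z]/(f)` is nilpotent; (ii) `f = c·(Z − α)^n` for some `α ∈ K`,
where `c` is the leading coefficient of `f`. -/
theorem hasseDeriv_nilpotent_iff_pow_linear {K : Type*} [Field K] [IsAlgClosed K]
    (f : Polynomial K) (n : ℕ) (hn : 1 ≤ n) (hdeg : f.natDegree = n) :
    (∀ k, k < n →
        IsNilpotent (Ideal.Quotient.mk (Ideal.span {f}) (Polynomial.hasseDeriv k f))) ↔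
      ∃ α : K, f = Polynomial.C f.leadingCoeff * (Polynomial.X - Polynomial.C α) ^ n := by
  have hf0 : f ≠ 0 := by rintro rfl; simp at hdeg; omega
  constructor
  · intro H
    obtain ⟨α, hα⟩ := IsAlgClosed.exists_root f (natDegree_pos_iff_degree_pos.mp (by omega)).ne'
    have hdvd : (X - C α) ^ n ∣ f := pow_X_sub_C_dvd_iff_eval_hasseDeriv.mpr fun k hk =>
      (hα.of_isNilpotent_mk_span (H k hk)).eq_zero
    exact ⟨α, eq_leadingCoeff_mul_of_monic_of_dvd_of_natDegree_le ((monic_X_sub_C α).pow n) hdvd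
      (by simp [hdeg])⟩
  · rintro ⟨α, hf⟩ k hk
    have hroot : (hasseDeriv k f).IsRoot α :=
      pow_X_sub_C_dvd_iff_eval_hasseDeriv.mp (Dvd.intro_left _ hf.symm) k hk
    have hdvd : f ∣ (X - C α) ^ n := by
      conv_lhs => rw [hf]
      exact (isUnit_C.mpr (leadingCoeff_ne_zero.mpr hf0).isUnit).mul_left_dvd.mpr dvd_rfl
    exact Ideal.Quotient.isNilpotent_mk_span_of_dvd_pow hdvd (dvd_iff_isRoot.mpr hroot)
end

section
/- Let R be a commutative ring, n a natural number, and y₁, …, yₙ ∈ R. Set F = ∏_{i=1}^n (X − yᵢ) ∈ R[X]. Then for every k with 0 ≤ k ≤ n, the k-th Hasse derivative of F is Δ^k F = ∑_{S ⊆ {1,…,n}, |S| = n−k} ∏_{i ∈ S} (X − yᵢ); that is, Δ^k F equals the (n−k)-th elementary symmetric polynomial of the linear factors X − y₁, …, X − yₙ. -/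
/-! Substituting `X + T` into `F = ∏ᵢ (X - yᵢ)` gives `∏ᵢ (T + (X - yᵢ))`, a product of monic
linear polynomials in `T` over `R[X]`. By definition `Δᵏ F` is its `T^k`-coefficient, which
Vieta's formula identifies with the `(n - k)`-th elementary symmetric function of the
`X - yᵢ`. -/

open Polynomial Finset

namespace Polynomial

theorem map_hasseDeriv {R S : Type*} [Semiring R] [Semiring S] (f : R →+* S) (k : ℕ) (p : R[X]) :
    (hasseDeriv k p).map f = hasseDeriv k (p.map f) := by
  ext n
  simp only [coeff_map, hasseDeriv_coeff, map_mul, map_natCast]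

/-- The expansion `p(X + T) = ∑ₖ (Δᵏ p)(X) Tᵏ`, with `T` the outer variable of `R[X][X]`. -/
theorem coeff_taylor_X_map_C {R : Type*} [Semiring R] (p : R[X]) (k : ℕ) :
    (taylor (X : R[X]) (p.map C)).coeff k = hasseDeriv k p := by
  rw [taylor_coeff, ← map_hasseDeriv, eval_map, eval₂_C_X]

theorem hasseDeriv_finsetProd_X_sub_C {R ι : Type*} [CommRing R] (s : Finset ι) (y : ι → R)
    {k : ℕ} (hk : k ≤ #s) :
    hasseDeriv k (∏ i ∈ s, (X - C (y i))) =
      ∑ t ∈ s.powersetCard (#s - k), ∏ i ∈ t, (X - C (y i)) := by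
  have h_taylor : taylor (X : R[X]) ((∏ i ∈ s, (X - C (y i))).map C) =
      ∏ i ∈ s, (X + C (X - C (y i))) := by
    rw [Polynomial.map_prod, ← taylorAlgHom_apply, map_prod]
    refine prod_congr rfl fun i _ => ?_
    simp only [Polynomial.map_sub, map_X, map_C, taylorAlgHom_apply, map_sub, taylor_X, taylor_C,
      add_sub_assoc]
  rw [← coeff_taylor_X_map_C, h_taylor, Finset.prod_X_add_C_coeff _ _ hk]

end Polynomial

/-- Let `R` be a commutative ring, `y₁, …, yₙ ∈ R`, and
`F = ∏ᵢ (X − yᵢ)`.  For every `k ≤ n`, the `k`-th Hasse derivative of `F` is the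
`(n−k)`-th elementary symmetric polynomial of the linear factors `X − yᵢ`, i.e.
`Δ^k F = ∑_{S ⊆ {1,…,n}, |S| = n−k} ∏_{i ∈ S} (X − yᵢ)`. -/
theorem hasseDeriv_prod_X_sub_C {R : Type*} [CommRing R] (n : ℕ) (y : Fin n → R)
    (k : ℕ) (hk : k ≤ n) :
    Polynomial.hasseDeriv k (∏ i, (Polynomial.X - Polynomial.C (y i))) =
      ∑ S ∈ Finset.powersetCard (n - k) (Finset.univ : Finset (Fin n)),
        ∏ i ∈ S, (Polynomial.X - Polynomial.C (y i)) := by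
  have h_card : #(univ : Finset (Fin n)) = n := by rw [card_univ, Fintype.card_fin]
  simpa only [h_card] using hasseDeriv_finsetProd_X_sub_C univ y (h_card.symm ▸ hk)
end

section
/- Let k be a field and n ≥ 1. Inside the polynomial ring k[Y₁,…,Yₙ], let A₁ be the subalgebra consisting of those elements of the k-subalgebra generated by the differences Yᵢ − Yⱼ (1 ≤ i, j ≤ n) that are invariant under all permutations of Y₁,…,Yₙ, and let A₂ be the k-subalgebra generated by the elementary symmetric polynomials e_j(Y₁ − Y₂, Y₁ − Y₃, …, Y₁ − Yₙ) for 1 ≤ j ≤ n−1. Then A₁ ⊆ A₂ and A₁ and A₂ have the same integral closure in k[Y₁,…,Yₙ]; in particular every element of A₂ is integral over A₁. -/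
/-!
Let `D ⊆ k[Y₁,…,Yₙ]` be the subalgebra generated by the differences. The substitution
`Xⱼ ↦ Y₁ - Yⱼ₊₁` is an isomorphism of `k[X₁,…,Xₙ₋₁]` onto `D` that intertwines permutations of
the `Xⱼ` with permutations of the `Yᵢ` fixing `Y₁`. A symmetric element of `D` therefore pulls
back to a symmetric polynomial in the `Xⱼ`, i.e. to a polynomial in their elementary symmetric
polynomials, whence `A₁ ⊆ A₂ ⊆ D`. Conversely `D` is stable under `Sₙ`, so each `x ∈ D` is a root
of the monic polynomial `∏_{σ ∈ Sₙ} (T - σ x)`, whose coefficients are symmetric elements of `D`,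
that is, elements of `A₁`.
-/

section Integrality

open Polynomial MulSemiringAction

variable {k R : Type*} [CommRing k] [CommRing R] [Algebra k R]

theorem integralClosure_coe_eq_of_le {A B : Subalgebra k R} (hAB : A ≤ B)
    (hB : ∀ b ∈ B, IsIntegral A b) :
    (integralClosure A R : Set R) = integralClosure B R := by
  let : Algebra A B := (Subalgebra.inclusion hAB).toAlgebra
  have : IsScalarTower A B R := .of_algebraMap_eq fun _ => rfl
  have : Algebra.IsIntegral A B :=
    ⟨fun b => IsIntegral.tower_bot Subtype.val_injective (hB b b.2)⟩
  ext x
  exact ⟨fun hx => hx.tower_top, fun hx => isIntegral_trans x hx⟩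

theorem isIntegral_of_mem_of_smul_stable {G : Type*} [Group G] [Finite G]
    [MulSemiringAction G R] {A B : Subalgebra k R} (hB : ∀ g : G, ∀ b ∈ B, g • b ∈ B)
    (hA : ∀ b ∈ B, (∀ g : G, g • b = b) → b ∈ A) {x : R} (hx : x ∈ B) : IsIntegral A x := by
  have := Fintype.ofFinite G
  have hcoeff_mem : ∀ n, (charpoly G x).coeff n ∈ B := by
    have : charpoly G x = (∏ g : G, (X - C (⟨g • x, hB g x hx⟩ : B))).map (algebraMap B R) := by
      simp [charpoly_eq, Polynomial.map_prod]
    intro n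
    rw [this, coeff_map]
    exact Subtype.prop _
  have hlifts : charpoly G x ∈ lifts (algebraMap A R) := (lifts_iff_coeff_lifts _).2 fun n =>
    ⟨⟨_, hA _ (hcoeff_mem n) (smul_coeff_charpoly x n)⟩, rfl⟩
  obtain ⟨p, hp_map, -, hp_monic⟩ := lifts_and_natDegree_eq_and_monic hlifts (monic_charpoly G x)
  exact ⟨p, hp_monic, by rw [← eval_map, hp_map, eval_charpoly]⟩

end Integrality

namespace MvPolynomial

open Equiv

theorem symmetricSubalgebra_le_adjoin_esymm (σ R : Type*) [CommRing R] [Fintype σ] :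
    symmetricSubalgebra σ R ≤
      Algebra.adjoin R {p | ∃ j, 1 ≤ j ∧ j ≤ Fintype.card σ ∧ p = esymm σ R j} := by
  intro p hp
  obtain ⟨r, hr⟩ := esymmAlgHom_surjective R le_rfl ⟨p, hp⟩
  have hp_mem :
      p ∈ Algebra.adjoin R (Set.range fun j : Fin (Fintype.card σ) => esymm σ R (j + 1)) := by
    rw [Algebra.adjoin_range_eq_range_aeval]
    exact ⟨r, (esymmAlgHom_apply r).symm.trans (congrArg Subtype.val hr)⟩
  refine Algebra.adjoin_mono ?_ hp_mem
  rintro _ ⟨j, rfl⟩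
  exact ⟨j + 1, by omega, j.2, rfl⟩

section Rename

variable {ι R : Type*}

noncomputable def renameMonoidHom [CommSemiring R] :
    Perm ι →* (MvPolynomial ι R ≃ₐ[R] MvPolynomial ι R) where
  toFun e := renameEquiv R e
  map_one' := renameEquiv_refl R
  map_mul' e f := (renameEquiv_trans R f e).symm

theorem isIntegral_inf_symmetricSubalgebra [CommRing R] [Finite ι]
    {B : Subalgebra R (MvPolynomial ι R)} (hB : ∀ e : Perm ι, ∀ p ∈ B, rename e p ∈ B)
    {x : MvPolynomial ι R} (hx : x ∈ B) : IsIntegral ↥(B ⊓ symmetricSubalgebra ι R) x := by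
  let : MulSemiringAction (Perm ι) (MvPolynomial ι R) := .compHom _ (renameMonoidHom (R := R))
  exact isIntegral_of_mem_of_smul_stable (G := Perm ι) (A := B ⊓ symmetricSubalgebra ι R)
    (fun e p hp => hB e p hp) (fun p hp hfix => ⟨hp, (mem_symmetricSubalgebra p).2 hfix⟩) hx

end Rename

variable (ι R : Type*) [CommRing R]

noncomputable def differenceSubalgebra : Subalgebra R (MvPolynomial ι R) :=
  Algebra.adjoin R {q | ∃ i j : ι, q = X i - X j}

variable {ι R}

theorem rename_mem_differenceSubalgebra {κ : Type*} (f : ι → κ) {p : MvPolynomial ι R}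
    (hp : p ∈ differenceSubalgebra ι R) : rename f p ∈ differenceSubalgebra κ R := by
  have : (differenceSubalgebra ι R).map (rename f) ≤ differenceSubalgebra κ R := by
    rw [differenceSubalgebra, AlgHom.map_adjoin]
    apply Algebra.adjoin_mono
    rintro _ ⟨_, ⟨i, j, rfl⟩, rfl⟩
    exact ⟨f i, f j, by simp⟩
  exact this ⟨p, hp, rfl⟩

variable {κ : Type*} (i₀ : ι) (e : κ ≃ {i // i ≠ i₀})

noncomputable def diffAlgHom : MvPolynomial κ R →ₐ[R] MvPolynomial ι R :=
  aeval fun j => X i₀ - X (e j : ι)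

theorem diffAlgHom_X (j : κ) : diffAlgHom i₀ e (X j : MvPolynomial κ R) = X i₀ - X (e j : ι) :=
  aeval_X _ _

theorem diffAlgHom_injective : Function.Injective (diffAlgHom (R := R) i₀ e) := by
  classical
  let ψ : MvPolynomial ι R →ₐ[R] MvPolynomial κ R :=
    aeval fun i => if h : i = i₀ then 0 else -X (e.symm ⟨i, h⟩)
  have hψ : ψ.comp (diffAlgHom i₀ e) = AlgHom.id R _ := by
    ext j
    simp [ψ, diffAlgHom_X, (e j).2]
  exact Function.LeftInverse.injective (g := ψ) (AlgHom.congr_fun hψ)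

theorem range_diffAlgHom : (diffAlgHom i₀ e).range = differenceSubalgebra ι R := by
  rw [diffAlgHom, ← Algebra.adjoin_range_eq_range_aeval]
  apply le_antisymm
  · exact Algebra.adjoin_mono (by rintro _ ⟨j, rfl⟩; exact ⟨i₀, e j, rfl⟩)
  · apply Algebra.adjoin_le
    rintro _ ⟨i, j, rfl⟩
    have hbase : ∀ i, X i₀ - X i ∈
        Algebra.adjoin R (Set.range fun j => (X i₀ - X (e j : ι) : MvPolynomial ι R)) := by
      intro i
      by_cases h : i = i₀
      · simp [h]
      · exact Algebra.subset_adjoin ⟨e.symm ⟨i, h⟩, by simp⟩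
    simpa using sub_mem (hbase j) (hbase i)

theorem rename_extendDomain_diffAlgHom [DecidableEq ι] (σ : Perm κ) (q : MvPolynomial κ R) :
    rename (σ.extendDomain e) (diffAlgHom i₀ e q) = diffAlgHom i₀ e (rename σ q) := by
  rw [← AlgHom.comp_apply, ← AlgHom.comp_apply]
  congr 1
  ext j
  simp [diffAlgHom_X, Perm.extendDomain_apply_image, Perm.extendDomain_apply_not_subtype]

theorem differenceSubalgebra_inf_symmetricSubalgebra_le :
    differenceSubalgebra ι R ⊓ symmetricSubalgebra ι R ≤
      (symmetricSubalgebra κ R).map (diffAlgHom i₀ e) := by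
  classical
  rintro p ⟨hp_diff, hp_symm⟩
  obtain ⟨q, rfl⟩ := (AlgHom.mem_range _).1 ((range_diffAlgHom i₀ e).ge hp_diff)
  refine ⟨q, (mem_symmetricSubalgebra q).2 fun σ => diffAlgHom_injective i₀ e ?_, rfl⟩
  rw [← rename_extendDomain_diffAlgHom, (mem_symmetricSubalgebra _).1 hp_symm]

end MvPolynomial

open MvPolynomial

def finSubOneEquiv {n : ℕ} (hn : 1 ≤ n) : Fin (n - 1) ≃ {i : Fin n // i ≠ ⟨0, hn⟩} where
  toFun i := ⟨⟨i + 1, Nat.add_lt_of_lt_sub i.2⟩, by simp [Fin.ext_iff]⟩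
  invFun i := ⟨i.1 - 1, by have : (i.1 : ℕ) ≠ 0 := Fin.val_ne_iff.2 i.2; omega⟩
  left_inv i := by ext; simp
  right_inv i := by ext; have : (i.1 : ℕ) ≠ 0 := Fin.val_ne_iff.2 i.2; simp; omega

/-- Inside `k[Y₁,…,Yₙ]` (`n ≥ 1`), let `A₁` be the subalgebra of symmetric
elements of the `k`-subalgebra generated by the differences `Yᵢ − Yⱼ`, and let `A₂` be the
`k`-subalgebra generated by the elementary symmetric polynomials
`e_j(Y₁ − Y₂, …, Y₁ − Yₙ)` for `1 ≤ j ≤ n − 1`.  Then `A₁ ⊆ A₂`, the two subalgebras have the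
same integral closure in `k[Y₁,…,Yₙ]`, and in particular every element of `A₂` is integral
over `A₁`. -/
theorem invariant_diff_subalgebra_integral_closure {k : Type*} [Field k] (n : ℕ) (hn : 1 ≤ n)
    (A₁ A₂ : Subalgebra k (MvPolynomial (Fin n) k))
    (hA₁ : A₁ =
      Algebra.adjoin k
          {q : MvPolynomial (Fin n) k | ∃ i j : Fin n, q = MvPolynomial.X i - MvPolynomial.X j}
        ⊓ MvPolynomial.symmetricSubalgebra (Fin n) k)
    (hA₂ : A₂ = Algebra.adjoin k
      {q : MvPolynomial (Fin n) k | ∃ j, 1 ≤ j ∧ j ≤ n - 1 ∧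
        q = MvPolynomial.aeval
              (fun i : Fin (n - 1) =>
                MvPolynomial.X (⟨0, hn⟩ : Fin n) -
                  MvPolynomial.X (⟨(i : ℕ) + 1, by omega⟩ : Fin n))
              (MvPolynomial.esymm (Fin (n - 1)) k j)}) :
    A₁ ≤ A₂ ∧
      (integralClosure ↥A₁ (MvPolynomial (Fin n) k) : Set (MvPolynomial (Fin n) k)) =
        (integralClosure ↥A₂ (MvPolynomial (Fin n) k) : Set (MvPolynomial (Fin n) k)) ∧
      ∀ x ∈ A₂, IsIntegral ↥A₁ x := by
  set φ := diffAlgHom (R := k) (⟨0, hn⟩ : Fin n) (finSubOneEquiv hn)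
  have hA₂_eq : A₂ = (Algebra.adjoin k {p | ∃ j, 1 ≤ j ∧ j ≤ Fintype.card (Fin (n - 1)) ∧
      p = esymm (Fin (n - 1)) k j}).map φ := by
    rw [hA₂, AlgHom.map_adjoin]
    congr 1
    ext q
    simp [φ, diffAlgHom, finSubOneEquiv, eq_comm, and_assoc]
  have hA₁₂ : A₁ ≤ A₂ := by
    rw [hA₁, hA₂_eq]
    exact (differenceSubalgebra_inf_symmetricSubalgebra_le _ _).trans
      (Subalgebra.map_mono (symmetricSubalgebra_le_adjoin_esymm _ _))
  have hA₂_int : ∀ x ∈ A₂, IsIntegral A₁ x := by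
    intro x hx
    rw [hA₂_eq] at hx
    obtain ⟨y, -, rfl⟩ := hx
    rw [hA₁]
    refine isIntegral_inf_symmetricSubalgebra (fun σ p => rename_mem_differenceSubalgebra σ) ?_
    exact (range_diffAlgHom (R := k) _ (finSubOneEquiv hn)).le ⟨y, rfl⟩
  exact ⟨hA₁₂, integralClosure_coe_eq_of_le hA₁₂ hA₂_int, hA₂_int⟩
end

section
/- Let B be a Noetherian commutative ring, let f₁,…,f_s ∈ B and let n₁,…,n_s be positive integers. Let G = B[f₁X^{n₁},…,f_sX^{n_s}] ⊆ B[X] be the B-subalgebra generated by the elements fᵢ·X^{nᵢ}. Let N be a common multiple of n₁,…,n_s and let A ⊆ B[X] be the B-subalgebra generated by all elements (∏ᵢ fᵢ^{aᵢ})·X^N where a₁,…,a_s are natural numbers with ∑ᵢ aᵢnᵢ = N. Then A ⊆ G and G is a finite A-module. -/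
/-! Each generator `(∏ᵢ fᵢ^aᵢ) X^N` of `A` is the product `∏ᵢ (fᵢ X^nᵢ)^aᵢ` of powers of the
generators of `G`, so `A ≤ G`; conversely `(fᵢ X^nᵢ)^(N / nᵢ)` is one of the generators of `A`.
Hence `G` is generated as an `A`-algebra by finitely many elements integral over `A`, so it is a
finite `A`-module. -/

open Polynomial

theorem Polynomial.prod_C_mul_X_pow_pow {R ι : Type*} [CommSemiring R] (t : Finset ι)
    (f : ι → R) (n a : ι → ℕ) :
    ∏ i ∈ t, (C (f i) * X ^ n i) ^ a i = C (∏ i ∈ t, f i ^ a i) * X ^ ∑ i ∈ t, a i * n i := by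
  simp only [mul_pow, ← C_pow, ← pow_mul, Finset.prod_mul_distrib, Finset.prod_pow_eq_pow_sum,
    map_prod, mul_comm (n _)]

namespace Subalgebra

variable {R S : Type*} [CommRing R] [CommRing S] [Algebra R S] {A T : Subalgebra R S}

theorem finiteType_inclusion (hT : T.FG) (h : A ≤ T) : (inclusion h).toRingHom.FiniteType := by
  have : Algebra.FiniteType R T := (fg_iff_finiteType T).mp hT
  exact .of_comp_finiteType (f := algebraMap R A) (RingHom.finiteType_algebraMap.mpr this)

theorem isIntegral_inclusion (h : A ≤ T) (hint : ∀ x ∈ T, IsIntegral A x) :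
    (inclusion h).toRingHom.IsIntegral := by
  intro y
  obtain ⟨p, hp, hev⟩ := hint y y.2
  refine ⟨p, hp, Subtype.val_injective ?_⟩
  exact (Polynomial.hom_eval₂ p (inclusion h).toRingHom (T.val : T →+* S) y).trans hev

theorem isIntegral_of_mem_adjoin_of_pow_mem {s : Set S}
    (hpow : ∀ x ∈ s, ∃ k, 0 < k ∧ x ^ k ∈ A) {x : S} (hx : x ∈ Algebra.adjoin R s) :
    IsIntegral A x := by
  have hle : Algebra.adjoin R s ≤ (integralClosure A S).restrictScalars R := by
    refine Algebra.adjoin_le fun y hy => ?_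
    obtain ⟨k, hk, hyk⟩ := hpow y hy
    exact IsIntegral.of_pow hk (isIntegral_algebraMap (x := (⟨_, hyk⟩ : A)))
  exact hle hx

theorem finite_inclusion_adjoin_of_pow_mem {s : Set S} (hs : s.Finite)
    (h : A ≤ Algebra.adjoin R s) (hpow : ∀ x ∈ s, ∃ k, 0 < k ∧ x ^ k ∈ A) :
    (inclusion h).toRingHom.Finite :=
  (isIntegral_inclusion h fun _ => isIntegral_of_mem_adjoin_of_pow_mem hpow).to_finite
    (finiteType_inclusion (fg_def.mpr ⟨s, hs, rfl⟩) h)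

end Subalgebra

theorem rees_algebra_finite_over_degree_N_part_general {B : Type*} [CommRing B]
    (s : ℕ) (f : Fin s → B) (n : Fin s → ℕ)
    (N : ℕ) (hNpos : 0 < N) (hN : ∀ i, n i ∣ N)
    (G A : Subalgebra B (Polynomial B))
    (hG : G = Algebra.adjoin B
      {p : Polynomial B | ∃ i : Fin s, p = Polynomial.C (f i) * Polynomial.X ^ n i})
    (hA : A = Algebra.adjoin B
      {p : Polynomial B | ∃ a : Fin s → ℕ, (∑ i, a i * n i) = N ∧
        p = Polynomial.C (∏ i, f i ^ a i) * Polynomial.X ^ N}) :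
    ∃ hAG : A ≤ G, RingHom.Finite (Subalgebra.inclusion hAG).toRingHom := by
  subst hG hA
  refine ⟨Algebra.adjoin_le ?_, Subalgebra.finite_inclusion_adjoin_of_pow_mem
    ((Set.finite_range fun i => C (f i) * X ^ n i).subset ?_) _ ?_⟩
  · rintro _ ⟨a, rfl, rfl⟩
    rw [← prod_C_mul_X_pow_pow]
    refine Subalgebra.prod_mem _ fun i _ => Subalgebra.pow_mem _ ?_ _
    exact Algebra.subset_adjoin ⟨i, rfl⟩
  · rintro _ ⟨i, rfl⟩
    exact ⟨i, rfl⟩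
  · rintro _ ⟨i, rfl⟩
    obtain ⟨k, rfl⟩ := hN i
    have hsum : ∑ j, (Pi.single i k : Fin s → ℕ) j * n j = n i * k := by
      simp [Pi.single_apply, mul_comm]
    refine ⟨k, Nat.pos_of_mul_pos_left hNpos, Algebra.subset_adjoin ⟨Pi.single i k, hsum, ?_⟩⟩
    rw [← hsum, ← prod_C_mul_X_pow_pow]
    simp [Pi.single_apply]

/-- Let `B` be a Noetherian commutative ring, `f₁,…,f_s ∈ B`, and
`n₁,…,n_s` positive integers.  Let `G = B[f₁X^{n₁},…,f_sX^{n_s}] ⊆ B[X]`, let `N` be a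
common multiple of the `nᵢ`, and let `A ⊆ B[X]` be the `B`-subalgebra generated by all
`(∏ᵢ fᵢ^{aᵢ})·X^N` with `∑ᵢ aᵢnᵢ = N`.  Then `A ⊆ G` and `G` is a finite `A`-module. -/
theorem rees_algebra_finite_over_degree_N_part {B : Type*} [CommRing B] [IsNoetherianRing B]
    (s : ℕ) (f : Fin s → B) (n : Fin s → ℕ) (hn : ∀ i, 0 < n i)
    (N : ℕ) (hNpos : 0 < N) (hN : ∀ i, n i ∣ N)
    (G A : Subalgebra B (Polynomial B))
    (hG : G = Algebra.adjoin B
      {p : Polynomial B | ∃ i : Fin s, p = Polynomial.C (f i) * Polynomial.X ^ n i})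
    (hA : A = Algebra.adjoin B
      {p : Polynomial B | ∃ a : Fin s → ℕ, (∑ i, a i * n i) = N ∧
        p = Polynomial.C (∏ i, f i ^ a i) * Polynomial.X ^ N}) :
    ∃ hAG : A ≤ G, RingHom.Finite (Subalgebra.inclusion hAG).toRingHom :=
  rees_algebra_finite_over_degree_N_part_general s f n N hNpos hN G A hG hA
end

section
/- Let B be a Noetherian commutative ring and let (I_n)_{n≥0} be a Rees family on B, with associated subalgebra G ⊆ B[X]. Then for all integers n, r with 1 ≤ n ≤ r and every f ∈ I_r, the element f·X^n ∈ B[X] is integral over G. -/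
/-!
Since `f ∈ I_r` and `I_k·I_l ⊆ I_{k+l}`, we get `f^n ∈ I_{nr}`, hence `f^r = f^(r-n)·f^n ∈ I_{nr}`.
So `(f·X^n)^r = f^r·X^(nr)` lies in `G`, and `f·X^n` is a root of the monic polynomial
`T^r - (f·X^n)^r` over `G`.
-/

open Polynomial

theorem Ideal.pow_mem_of_mul_le_add {B : Type*} [CommSemiring B] {I : ℕ → Ideal B}
    (hImul : ∀ k l : ℕ, I k * I l ≤ I (k + l)) {f : B} {r : ℕ} (hf : f ∈ I r) :
    ∀ {k : ℕ}, k ≠ 0 → f ^ k ∈ I (k * r)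
  | 1, _ => by simpa using hf
  | k + 2, _ => by
    have ih : f ^ (k + 1) ∈ I ((k + 1) * r) := pow_mem_of_mul_le_add hImul hf k.succ_ne_zero
    rw [pow_succ, show (k + 2) * r = (k + 1) * r + r by ring]
    exact hImul _ _ (Ideal.mul_mem_mul ih hf)

theorem Polynomial.C_mul_X_pow_mem_of_mem {B : Type*} [CommSemiring B] {I : ℕ → Ideal B}
    {G : Subalgebra B B[X]} (hG : ∀ p : B[X], p ∈ G ↔ ∀ m : ℕ, p.coeff m ∈ I m)
    {f : B} {n : ℕ} (hf : f ∈ I n) : C f * X ^ n ∈ G := by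
  rw [hG]
  intro m
  rw [coeff_C_mul_X_pow]
  split_ifs with hm
  · exact hm ▸ hf
  · exact zero_mem _

theorem Subalgebra.isIntegral_of_mem {R A : Type*} [CommRing R] [CommRing A] [Algebra R A]
    (G : Subalgebra R A) {x : A} (hx : x ∈ G) : IsIntegral G x :=
  isIntegral_algebraMap (x := (⟨x, hx⟩ : G))

theorem rees_family_high_coeff_isIntegral_general {B : Type*} [CommRing B]
    (I : ℕ → Ideal B) (hImul : ∀ k l : ℕ, I k * I l ≤ I (k + l))
    (G : Subalgebra B (Polynomial B))
    (hG : ∀ p : Polynomial B, p ∈ G ↔ ∀ m : ℕ, p.coeff m ∈ I m)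
    (n r : ℕ) (hn : 1 ≤ n) (hnr : n ≤ r) (f : B) (hf : f ∈ I r) :
    IsIntegral ↥G (Polynomial.C f * Polynomial.X ^ n) := by
  have hfr : f ^ r ∈ I (n * r) := by
    rw [← pow_sub_mul_pow f hnr]
    exact Ideal.mul_mem_left _ _ (Ideal.pow_mem_of_mul_le_add hImul hf (by omega))
  refine IsIntegral.of_pow (lt_of_lt_of_le hn hnr) (G.isIntegral_of_mem ?_)
  rw [mul_pow, ← C_pow, ← pow_mul]
  exact C_mul_X_pow_mem_of_mem hG hfr

/-- Let `B` be a Noetherian commutative ring, `(Iₙ)ₙ` a Rees family on `B`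
(`I₀ = B`, `I_k·I_l ⊆ I_{k+l}`), and let `G ⊆ B[X]` be the associated subalgebra, consisting
of the polynomials whose `m`-th coefficient lies in `I_m` for every `m`.  Then for all
`1 ≤ n ≤ r` and every `f ∈ I_r`, the element `f·X^n` is integral over `G`. -/
theorem rees_family_high_coeff_isIntegral {B : Type*} [CommRing B] [IsNoetherianRing B]
    (I : ℕ → Ideal B) (hI0 : I 0 = ⊤) (hImul : ∀ k l : ℕ, I k * I l ≤ I (k + l))
    (G : Subalgebra B (Polynomial B))
    (hG : ∀ p : Polynomial B, p ∈ G ↔ ∀ m : ℕ, p.coeff m ∈ I m)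
    (n r : ℕ) (hn : 1 ≤ n) (hnr : n ≤ r) (f : B) (hf : f ∈ I r) :
    IsIntegral ↥G (Polynomial.C f * Polynomial.X ^ n) :=
  rees_family_high_coeff_isIntegral_general I hImul G hG n r hn hnr f hf
end

section
/- Let (S, m) be a commutative local ring, let n ≥ 1, and let f = Z^n + a₁Z^{n−1} + ⋯ + a_{n−1}Z + a_n ∈ S[Z] with aᵢ ∈ m^i for every 1 ≤ i ≤ n. Let B = S[Z]/(f), let z̄ denote the class of Z in B, and let M = mB + (z̄). Then M^n = (mB)·M^{n−1}; in particular, the extended ideal mB is a reduction of the ideal M. -/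
/-!
Modulo `f`, `z̄ⁿ = -∑ aᵢ z̄ⁿ⁻ⁱ`, and `aᵢ z̄ⁿ⁻ⁱ ∈ (mB)ⁱ Mⁿ⁻ⁱ ⊆ mB · Mⁿ⁻¹` because `mB ⊆ M` and `z̄ ∈ M`.
Expanding `Mⁿ = (mB + (z̄))ⁿ`, every product other than `z̄ⁿ` already has a factor from `mB`,
so `Mⁿ ⊆ mB · Mⁿ⁻¹`; the reverse inclusion is `mB ⊆ M`.
-/

namespace Ideal

section CommSemiring

variable {R : Type*} [CommSemiring R]

theorem sup_pow_succ_le_mul_sup_pow (I J : Ideal R) (k : ℕ) :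
    (I ⊔ J) ^ (k + 1) ≤ I * (I ⊔ J) ^ k ⊔ J ^ (k + 1) := by
  induction k with
  | zero => simp
  | succ k ih =>
    have hJI : J * I * (I ⊔ J) ^ k ≤ I * (I ⊔ J) ^ (k + 1) := by
      rw [mul_comm J, mul_assoc, pow_succ' (I ⊔ J)]
      exact mul_mono_right (mul_mono_left le_sup_right)
    calc (I ⊔ J) ^ (k + 2) = I * (I ⊔ J) ^ (k + 1) ⊔ J * (I ⊔ J) ^ (k + 1) := by
          rw [pow_succ' _ (k + 1), sup_mul]
      _ ≤ I * (I ⊔ J) ^ (k + 1) ⊔ (J * I * (I ⊔ J) ^ k ⊔ J ^ (k + 2)) := by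
          rw [mul_assoc, pow_succ' J (k + 1), ← mul_sup]
          gcongr
      _ ≤ I * (I ⊔ J) ^ (k + 1) ⊔ J ^ (k + 2) := sup_le le_sup_left (sup_le_sup_right hJI _)

theorem sup_span_singleton_pow_succ_eq_mul {I : Ideal R} {z : R} {k : ℕ}
    (hz : z ^ (k + 1) ∈ I * (I ⊔ span {z}) ^ k) :
    (I ⊔ span {z}) ^ (k + 1) = I * (I ⊔ span {z}) ^ k := by
  refine le_antisymm ((sup_pow_succ_le_mul_sup_pow _ _ k).trans (sup_le le_rfl ?_)) ?_
  · rwa [span_singleton_pow, span_le, Set.singleton_subset_iff]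
  · rw [pow_succ']
    exact mul_mono_left le_sup_left

end CommSemiring

theorem pow_mem_mul_pow_pred_of_integral_dependence {R : Type*} [CommRing R] {I M : Ideal R}
    (hIM : I ≤ M) {z : R} (hzM : z ∈ M) {n : ℕ} (c : Fin n → R)
    (hc : ∀ i : Fin n, c i ∈ I ^ ((i : ℕ) + 1))
    (hz : z ^ n + ∑ i, c i * z ^ (n - ((i : ℕ) + 1)) = 0) :
    z ^ n ∈ I * M ^ (n - 1) := by
  rw [eq_neg_of_add_eq_zero_left hz]
  refine neg_mem (_root_.sum_mem fun i _ => ?_)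
  have hdeg : I ^ ((i : ℕ) + 1) * M ^ (n - ((i : ℕ) + 1)) ≤ I * M ^ (n - 1) := by
    calc I ^ ((i : ℕ) + 1) * M ^ (n - ((i : ℕ) + 1))
        ≤ I * (M ^ (i : ℕ) * M ^ (n - ((i : ℕ) + 1))) := by
          rw [pow_succ', mul_assoc]
          exact mul_mono_right (mul_mono_left (pow_right_mono hIM _))
      _ = I * M ^ (n - 1) := by rw [← pow_add]; congr 2; omega
  exact hdeg (mul_mem_mul (hc i) (pow_mem_pow hzM _))

end Ideal

/-- Let `(S, m)` be a commutative local ring, `n ≥ 1`, and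
`f = Z^n + a₁Z^{n−1} + ⋯ + aₙ ∈ S[Z]` with `aᵢ ∈ m^i` for all `1 ≤ i ≤ n`.  Let
`B = S[Z]/(f)`, let `z̄` be the class of `Z`, and `M = mB + (z̄)`.  Then
`M^n = (mB)·M^{n−1}`; in particular `mB` is a reduction of `M`. -/
theorem extended_maximal_ideal_reduction {S : Type*} [CommRing S] [IsLocalRing S]
    (n : ℕ) (hn : 1 ≤ n) (a : Fin n → S)
    (ha : ∀ i : Fin n, a i ∈ IsLocalRing.maximalIdeal S ^ ((i : ℕ) + 1))
    (f : Polynomial S)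
    (hf : f = Polynomial.X ^ n +
      ∑ i : Fin n, Polynomial.C (a i) * Polynomial.X ^ (n - ((i : ℕ) + 1)))
    (M mB : Ideal (Polynomial S ⧸ Ideal.span {f}))
    (hmB : mB = Ideal.map (algebraMap S (Polynomial S ⧸ Ideal.span {f}))
      (IsLocalRing.maximalIdeal S))
    (hM : M = mB ⊔ Ideal.span {Ideal.Quotient.mk (Ideal.span {f}) Polynomial.X}) :
    M ^ n = mB * M ^ (n - 1) ∧ ∃ t : ℕ, M ^ (t + 1) = mB * M ^ t := by
  subst hM
  set z := Ideal.Quotient.mk (Ideal.span {f}) Polynomial.X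
  have hz : z ^ n + ∑ i, algebraMap S _ (a i) * z ^ (n - ((i : ℕ) + 1)) = 0 := by
    have := Ideal.Quotient.eq_zero_iff_mem.2 (Ideal.mem_span_singleton.2 (dvd_of_eq hf))
    simpa only [map_add, map_sum, map_mul, map_pow, ← Polynomial.algebraMap_eq,
      Ideal.Quotient.mk_algebraMap] using this
  have hc (i : Fin n) : algebraMap S _ (a i) ∈ mB ^ ((i : ℕ) + 1) := by
    rw [hmB, ← Ideal.map_pow]
    exact Ideal.mem_map_of_mem _ (ha i)
  have hzn := Ideal.pow_mem_mul_pow_pred_of_integral_dependence le_sup_left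
    (Ideal.mem_sup_right (Ideal.mem_span_singleton_self z)) _ hc hz
  obtain ⟨k, rfl⟩ : ∃ k, n = k + 1 := ⟨n - 1, by omega⟩
  rw [Nat.add_sub_cancel] at hzn ⊢
  have hred := Ideal.sup_span_singleton_pow_succ_eq_mul hzn
  exact ⟨hred, k, hred⟩
end
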